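/- Let Γ be a countable discrete amenable group, let d ≥ 1, and let k : Γ → M_d(ℂ) be a function such that for every nonempty finite subset F ⊆ Γ the complex matrix h_F, indexed by F × {1,…,d} and defined by h_F((s,i),(t,j)) = (k(st⁻¹))_{i,j}, is positive definite. Then det(h_F)^{1/|F|} converges to inf_F det(h_F)^{1/|F|} (the infimum over all nonempty finite F ⊆ Γ) as F becomes more and more left invariant; concretely, this infimum is a nonnegative real number c, det(h_F)^{1/|F|} ≥ c for all nonempty finite F, and for every ε > 0 there exist a nonempty finite K ⊆ Γ and δ > 0 such that det(h_F)^{1/|F|} < c + ε for every F ∈ B(K,δ). -/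

import Mathlib

open scoped ComplexOrder
/-- `F` belongs to `B(K, δ)`: `F` is a nonempty finite subset of `Γ` such that
`|{t ∈ F : Kt ⊆ F}| ≥ (1 − δ)|F|`. -/
def memApproxInv {Γ : Type*} [Group Γ] [DecidableEq Γ] (K : Finset Γ) (δ : ℝ)
    (F : Finset Γ) : Prop :=
  F.Nonempty ∧ (1 - δ) * (F.card : ℝ) ≤ ((F.filter fun t => ∀ k ∈ K, k * t ∈ F).card : ℝ)

/-- The compression `h_F` of the matrix-valued kernel `k : Γ → M_d(ℂ)`:
the complex matrix indexed by `F × {1,…,d}` with entries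
`h_F((s,i),(t,j)) = (k (s t⁻¹))_{i,j}`. -/
def kernelCompression {Γ : Type*} [Group Γ] {d : ℕ} (k : Γ → Matrix (Fin d) (Fin d) ℂ)
    (F : Finset Γ) :
    Matrix ({a // a ∈ F} × Fin d) ({a // a ∈ F} × Fin d) ℂ :=
  Matrix.of fun p q => k (p.1.1 * q.1.1⁻¹) p.2 q.2

/-!
For a positive definite matrix `M`, the function `s ↦ log det M[s]` on finite index sets is
submodular: with `S` the Schur complement of `M[s]`, the local inequality
`det M[s+x+y] · det M[s] ≤ det M[s+x] · det M[s+y]` reads `|S x y|² ≥ 0`.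
Applied to the blocks `A × {1,…,d}`, the function `A ↦ log det h_A` is submodular, vanishes
at `∅`, and is invariant under right translation.  For `F ∈ B(W ∪ W⁻¹, δ)`, the sets `Wt ∩ F`
(`t ∈ F`) cover all but `δ|F|` points of `F` exactly `|W|` times, so a Shearer-type inequality
gives `|W| log det h_F ≤ |F| log det h_W + O(δ|F|)`.  Taking `W` with `det(h_W)^{1/|W|}` close
to the infimum proves the claim.
-/

open Finset Matrix
open scoped Pointwise

section SetFunction

variable {α : Type*} [DecidableEq α]

def IsSubmodular (g : Finset α → ℝ) : Prop :=
  ∀ s t, g (s ∪ t) + g (s ∩ t) ≤ g s + g t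

variable {g : Finset α → ℝ}

theorem IsSubmodular.insert_add_le (hg : IsSubmodular g) {A B : Finset α} {x : α}
    (hAB : A ⊆ B) (hx : x ∉ B) : g (insert x B) + g A ≤ g (insert x A) + g B := by
  have := hg (insert x A) B
  rwa [insert_union, union_eq_right.2 hAB, insert_inter_of_notMem hx,
    inter_eq_left.2 hAB] at this

theorem insert_add_le_of_insert_insert
    (hg : ∀ s x y, x ∉ s → y ∉ s → x ≠ y →
      g (insert x (insert y s)) + g s ≤ g (insert x s) + g (insert y s))
    {A B : Finset α} {x : α} (hAB : A ⊆ B) (hx : x ∉ B) :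
    g (insert x B) + g A ≤ g (insert x A) + g B := by
  suffices ∀ C : Finset α, Disjoint C A → x ∉ C ∪ A →
      g (insert x (C ∪ A)) + g A ≤ g (insert x A) + g (C ∪ A) by
    simpa [sdiff_union_of_subset hAB] using
      this (B \ A) sdiff_disjoint (by rwa [sdiff_union_of_subset hAB])
  intro C
  induction C using Finset.induction_on with
  | empty => simp
  | insert y C hyC ih =>
    intro hCA hxC
    rw [insert_union] at hxC ⊢
    have hyA : y ∉ C ∪ A := by simp_all [disjoint_insert_left]
    have := hg (C ∪ A) x y (fun h => hxC (mem_insert_of_mem h)) hyA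
      (fun h => hxC (h ▸ mem_insert_self _ _))
    have := ih (disjoint_insert_left.1 hCA).2 (fun h => hxC (mem_insert_of_mem h))
    linarith

theorem isSubmodular_of_insert_insert
    (hg : ∀ s x y, x ∉ s → y ∉ s → x ≠ y →
      g (insert x (insert y s)) + g s ≤ g (insert x s) + g (insert y s)) :
    IsSubmodular g := by
  intro s t
  suffices ∀ C : Finset α, Disjoint C t → g (C ∪ t) + g (s ∩ t) ≤ g (C ∪ s ∩ t) + g t by
    simpa [sdiff_union_self_eq_union, sdiff_union_inter] using this (s \ t) sdiff_disjoint
  intro C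
  induction C using Finset.induction_on with
  | empty => simp [add_comm]
  | insert x C hxC ih =>
    intro hCt
    rw [disjoint_insert_left] at hCt
    have := insert_add_le_of_insert_insert hg
      (union_subset_union_right (inter_subset_right (s₁ := s))) (x := x) (B := C ∪ t)
      (by simp [hxC, hCt.1])
    have := ih hCt.2
    rw [insert_union, insert_union]
    linarith

theorem IsSubmodular.mul_le_sum_add_sum_singleton {β : Type*} (hg : IsSubmodular g) (hg0 : g ∅ = 0)
    (I : Finset β) (m : ℕ) (F : Finset α) (S : β → Finset α) (hS : ∀ i ∈ I, S i ⊆ F)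
    (hm : ∀ x ∈ F, #{i ∈ I | x ∈ S i} ≤ m) :
    m * g F ≤ ∑ i ∈ I, g (S i) + ∑ x ∈ F, (m - #{i ∈ I | x ∈ S i} : ℝ) * g {x} := by
  induction F using Finset.induction_on generalizing S with
  | empty =>
    have hS0 : ∀ i ∈ I, S i = ∅ := fun i hi => subset_empty.1 (hS i hi)
    simp [hg0, sum_congr rfl fun i hi => congrArg g (hS0 i hi)]
  | insert a F ha ih =>
    -- Remove `a` from every `S i`: each `S i ∋ a` loses at least the increment
    -- `g (insert a F) - g F`, and the missing `m - #{i ∈ I | a ∈ S i}` copies of that increment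
    -- are each at most `g {a}`.
    have hS' : ∀ i ∈ I, (S i).erase a ⊆ F := fun i hi => subset_insert_iff.1 (hS i hi)
    have hcard : ∀ x ∈ F, #{i ∈ I | x ∈ (S i).erase a} = #{i ∈ I | x ∈ S i} := fun x hx =>
      congrArg card <| filter_congr fun i _ => by simp [ne_of_mem_of_not_mem hx ha]
    have ih' := ih _ hS' fun x hx => hcard x hx ▸ hm x (mem_insert_of_mem hx)
    rw [sum_congr rfl fun x hx => congrArg (fun n : ℕ => ((m : ℝ) - n) * g {x}) (hcard x hx)]
      at ih'
    have hinc : ∀ i ∈ I, (if a ∈ S i then g (insert a F) - g F else 0) ≤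
        g (S i) - g ((S i).erase a) := by
      intro i hi
      split_ifs with haS
      · have := hg.insert_add_le (hS' i hi) ha
        rw [insert_erase haS] at this
        linarith
      · simp [erase_eq_of_notMem haS]
    have hsingle : g (insert a F) - g F ≤ g {a} := by
      have := hg.insert_add_le (empty_subset F) ha
      simp only [insert_empty, hg0] at this
      linarith
    have hcount := sum_le_sum hinc
    rw [← sum_filter, sum_const, nsmul_eq_mul, sum_sub_distrib] at hcount
    have hma : (#{i ∈ I | a ∈ S i} : ℝ) ≤ m := by exact_mod_cast hm a (mem_insert_self a F)
    have := mul_le_mul_of_nonneg_left hsingle (sub_nonneg.2 hma)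
    rw [sum_insert ha]
    linarith

theorem Finset.sum_le_card_sdiff_mul {s t : Finset α} (hts : t ⊆ s) {u : α → ℝ} {c : ℝ}
    (ht : ∀ x ∈ t, u x ≤ 0) (hs : ∀ x ∈ s, u x ≤ c) : ∑ x ∈ s, u x ≤ #(s \ t) * c := by
  rw [← sum_sdiff hts, ← nsmul_eq_mul]
  linarith [sum_le_card_nsmul (s \ t) u c fun x hx => hs x (mem_sdiff.1 hx).1,
    sum_nonpos ht]

end SetFunction

section RightTranslates

variable {Γ : Type*} [Group Γ] [DecidableEq Γ]

theorem card_filter_mem_image_mul_right_le (W F : Finset Γ) (x : Γ) :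
    #{t ∈ F | x ∈ W.image (· * t) ∩ F} ≤ #W := by
  refine card_le_card_of_injOn (fun t => x * t⁻¹) (fun t ht => ?_) fun t _ t' _ h => ?_
  · obtain ⟨w, hw, rfl⟩ := mem_image.1 (mem_inter.1 (mem_filter.1 ht).2).1
    simpa using hw
  · simpa using h

theorem card_le_card_filter_mem_image_mul_right {W F : Finset Γ} {x : Γ} (hx : x ∈ F)
    (hW : ∀ w ∈ W, w⁻¹ * x ∈ F) : #W ≤ #{t ∈ F | x ∈ W.image (· * t) ∩ F} := by
  refine card_le_card_of_injOn (fun w => w⁻¹ * x) (fun w hw => ?_) fun w _ w' _ h => ?_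
  · exact mem_filter.2 ⟨hW w hw, mem_inter.2 ⟨mem_image.2 ⟨w, hw, by simp⟩, hx⟩⟩
  · simpa using h

variable {g : Finset Γ → ℝ}

theorem IsSubmodular.card_mul_le_of_memApproxInv (hg : IsSubmodular g) (hg0 : g ∅ = 0)
    (hinv : ∀ A t, g (A.image (· * t)) = g A) {W F : Finset Γ} {δ : ℝ}
    (hF : memApproxInv (W ∪ W⁻¹) δ F) :
    #W * g F ≤ #F * g W + δ * #F * (2 * ∑ A ∈ W.powerset, |g A| + #W * |g {1}|) := by
  set G := F.filter fun t => ∀ k ∈ W ∪ W⁻¹, k * t ∈ F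
  set M := ∑ A ∈ W.powerset, |g A|
  have hGF : G ⊆ F := filter_subset _ _
  have hbad : (#(F \ G) : ℝ) ≤ δ * #F := by
    rw [card_sdiff_of_subset hGF, Nat.cast_sub (card_le_card hGF)]
    linarith [hF.2]
  have hM : ∀ A ⊆ W, |g A| ≤ M := fun A hA =>
    single_le_sum (f := fun A => |g A|) (fun _ _ => abs_nonneg _) (mem_powerset.2 hA)
  have hcover := hg.mul_le_sum_add_sum_singleton hg0 F #W F (fun t => W.image (· * t) ∩ F)
    (fun _ _ => inter_subset_right) fun x _ => card_filter_mem_image_mul_right_le W F x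
  have htranslates : ∑ t ∈ F, g (W.image (· * t) ∩ F) ≤ #F * g W + #(F \ G) * (2 * M) := by
    have := sum_le_card_sdiff_mul hGF (u := fun t => g (W.image (· * t) ∩ F) - g W)
      (c := 2 * M) (fun t ht => ?_) fun t _ => ?_
    · rw [sum_sub_distrib, sum_const, nsmul_eq_mul] at this
      linarith
    · have : W.image (· * t) ⊆ F := image_subset_iff.2 fun w hw =>
        (mem_filter.1 ht).2 w (mem_union_left _ hw)
      simp only [inter_eq_left.2 this, hinv, sub_self, le_refl]
    · have : W.image (· * t) ∩ F = (W.filter (· * t ∈ F)).image (· * t) := by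
        ext; simp
      simp only [this, hinv]
      linarith [le_abs_self (g (W.filter (· * t ∈ F))), hM _ (filter_subset (· * t ∈ F) W),
        neg_abs_le (g W), hM W subset_rfl]
  have hsingletons : ∑ x ∈ F, (#W - #{t ∈ F | x ∈ W.image (· * t) ∩ F} : ℝ) * g {x} ≤
      #(F \ G) * (#W * |g {1}|) := by
    refine sum_le_card_sdiff_mul hGF (fun x hx => ?_) fun x _ => ?_
    · obtain ⟨hxF, hxK⟩ := mem_filter.1 hx
      have := card_le_card_filter_mem_image_mul_right hxF fun w hw =>
        hxK w⁻¹ (mem_union_right _ (by simpa using hw))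
      rw [le_antisymm (card_filter_mem_image_mul_right_le W F x) this]
      simp
    · have hx : g {x} = g {1} := by rw [← hinv {1} x, image_singleton, one_mul]
      have hcov : (#{t ∈ F | x ∈ W.image (· * t) ∩ F} : ℝ) ≤ #W := by
        exact_mod_cast card_filter_mem_image_mul_right_le W F x
      rw [hx]
      calc _ ≤ (#W - #{t ∈ F | x ∈ W.image (· * t) ∩ F} : ℝ) * |g {1}| :=
            mul_le_mul_of_nonneg_left (le_abs_self _) (sub_nonneg.2 hcov)
        _ ≤ #W * |g {1}| :=
            mul_le_mul_of_nonneg_right (sub_le_self _ (Nat.cast_nonneg _)) (abs_nonneg _)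
  calc (#W * g F : ℝ)
      ≤ ∑ t ∈ F, g (W.image (· * t) ∩ F) +
          ∑ x ∈ F, (#W - #{t ∈ F | x ∈ W.image (· * t) ∩ F} : ℝ) * g {x} := hcover
    _ ≤ #F * g W + #(F \ G) * (2 * M + #W * |g {1}|) := by linarith
    _ ≤ #F * g W + δ * #F * (2 * M + #W * |g {1}|) := by gcongr

theorem IsSubmodular.exists_forall_memApproxInv_div_card_lt (hg : IsSubmodular g)
    (hg0 : g ∅ = 0) (hinv : ∀ A t, g (A.image (· * t)) = g A) {W : Finset Γ}
    (hW : W.Nonempty) {b : ℝ} (hb : g W / #W < b) :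
    ∃ δ > 0, ∀ F, memApproxInv (W ∪ W⁻¹) δ F → g F / #F < b := by
  set C := 2 * ∑ A ∈ W.powerset, |g A| + #W * |g {1}|
  have hC : 0 ≤ C := by positivity
  have hWpos : (0 : ℝ) < #W := by exact_mod_cast hW.card_pos
  set η := b - g W / #W
  have hη : 0 < η := sub_pos.2 hb
  refine ⟨η * #W / (C + 1), by positivity, fun F hF => ?_⟩
  have hFpos : (0 : ℝ) < #F := by exact_mod_cast hF.1.card_pos
  have hδC : η * #W / (C + 1) * C < η * #W := by
    rw [div_mul_eq_mul_div, div_lt_iff₀ (by positivity)]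
    nlinarith [mul_pos hη hWpos]
  have key : #W * g F < #W * (b * #F) :=
    calc #W * g F ≤ #F * g W + η * #W / (C + 1) * #F * C :=
          hg.card_mul_le_of_memApproxInv hg0 hinv hF
      _ < #F * g W + #F * (η * #W) := by nlinarith [mul_lt_mul_of_pos_left hδC hFpos]
      _ = #W * (b * #F) := by
          simp only [η]
          field_simp
          ring
  rw [div_lt_iff₀ hFpos]
  exact lt_of_mul_lt_mul_left key hWpos.le

end RightTranslates

namespace Matrix

variable {ι R : Type*}

def principalSubmatrix (M : Matrix ι ι R) (s : Finset ι) : Matrix s s R :=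
  M.submatrix (↑) (↑)

variable [DecidableEq ι] [CommRing R]

theorem det_principalSubmatrix_singleton (M : Matrix ι ι R) (x : ι) :
    (M.principalSubmatrix {x}).det = M x x :=
  det_unique _

noncomputable def schurCompl (M : Matrix ι ι R) (s : Finset ι) : Matrix ι ι R :=
  M - M.submatrix id ((↑) : s → ι) * (M.principalSubmatrix s)⁻¹ *
    M.submatrix ((↑) : s → ι) id

theorem det_principalSubmatrix_union {M : Matrix ι ι R} {s t : Finset ι} (hst : Disjoint s t)
    (hs : IsUnit (M.principalSubmatrix s).det) :
    (M.principalSubmatrix (s ∪ t)).det =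
      (M.principalSubmatrix s).det * ((M.schurCompl s).principalSubmatrix t).det := by
  let := invertibleOfIsUnitDet _ hs
  let e := Equiv.Finset.union s t hst
  have hblocks : (M.principalSubmatrix (s ∪ t)).submatrix e e =
      fromBlocks (M.principalSubmatrix s) (M.submatrix (↑) (↑)) (M.submatrix (↑) (↑))
        (M.principalSubmatrix t) := by
    ext (i | i) (j | j) <;> rfl
  rw [← det_submatrix_equiv_self e, hblocks, det_fromBlocks₁₁, invOf_eq_nonsing_inv]
  rfl

theorem det_principalSubmatrix_pair {K : Type*} [Field K] {M : Matrix ι ι K} {x y : ι}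
    (hxy : x ≠ y) (hy : M y y ≠ 0) :
    (M.principalSubmatrix {x, y}).det = M y y * (M x x - M x y * (M y y)⁻¹ * M y x) := by
  rw [insert_eq, union_comm, det_principalSubmatrix_union (disjoint_singleton.2 hxy.symm)
    (by rwa [det_principalSubmatrix_singleton, isUnit_iff_ne_zero]),
    det_principalSubmatrix_singleton, det_principalSubmatrix_singleton]
  simp [schurCompl, principalSubmatrix, mul_apply, inv_subsingleton]

theorem IsHermitian.schurCompl [StarRing R] {M : Matrix ι ι R} (hM : M.IsHermitian)
    (s : Finset ι) : (M.schurCompl s).IsHermitian := by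
  have hB : (M.submatrix id ((↑) : s → ι))ᴴ = M.submatrix (↑) id := by
    rw [conjTranspose_submatrix, hM.eq]
  unfold Matrix.schurCompl
  rw [← hB]
  exact hM.sub (isHermitian_mul_mul_conjTranspose _ (hM.submatrix _).inv)

theorem PosDef.det_principalSubmatrix_insert_insert_mul_le {M : Matrix ι ι ℂ} (hM : M.PosDef)
    {s : Finset ι} {x y : ι} (hx : x ∉ s) (hy : y ∉ s) (hxy : x ≠ y) :
    (M.principalSubmatrix (insert x (insert y s))).det * (M.principalSubmatrix s).det ≤
      (M.principalSubmatrix (insert x s)).det * (M.principalSubmatrix (insert y s)).det := by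
  have hpos : ∀ t : Finset ι, 0 < (M.principalSubmatrix t).det := fun t =>
    (hM.submatrix Subtype.val_injective).det_pos
  set a := (M.principalSubmatrix s).det
  set S := M.schurCompl s
  have hunion : ∀ t, Disjoint s t → (M.principalSubmatrix (s ∪ t)).det =
      a * (S.principalSubmatrix t).det := fun t hst =>
    det_principalSubmatrix_union hst (hpos s).ne'.isUnit
  have hinsert : ∀ z ∉ s, (M.principalSubmatrix (insert z s)).det = a * S z z := by
    intro z hz
    rw [insert_eq, union_comm, hunion _ (disjoint_singleton_right.2 hz),
      det_principalSubmatrix_singleton]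
  have hSy : S y y ≠ 0 := right_ne_zero_of_mul (hinsert y hy ▸ (hpos _).ne')
  have hpair : (M.principalSubmatrix (insert x (insert y s))).det =
      a * (S y y * (S x x - S x y * (S y y)⁻¹ * S y x)) := by
    rw [← det_principalSubmatrix_pair hxy hSy, ← hunion _ (by simp [hx, hy]), union_insert,
      union_singleton]
  have hSyx : S y x = star (S x y) := ((hM.isHermitian.schurCompl s).apply y x).symm
  rw [hpair, hinsert x hx, hinsert y hy, hSyx, ← sub_nonneg]
  have : a * S x x * (a * S y y) - a * (S y y * (S x x - S x y * (S y y)⁻¹ * star (S x y))) * a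
      = a ^ 2 * (star (S x y) * S x y) := by
    field_simp
    ring
  rw [this]
  exact mul_nonneg (pow_pos (hpos s) 2).le (star_mul_self_nonneg _)

theorem PosDef.isSubmodular_log_det_re {M : Matrix ι ι ℂ} (hM : M.PosDef) :
    IsSubmodular fun s => Real.log (M.principalSubmatrix s).det.re := by
  have hdet : ∀ t : Finset ι, 0 < (M.principalSubmatrix t).det.re ∧
      0 = (M.principalSubmatrix t).det.im := fun t =>
    Complex.pos_iff.1 (hM.submatrix Subtype.val_injective).det_pos
  refine isSubmodular_of_insert_insert fun s x y hx hy hxy => ?_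
  have h := (Complex.le_def.1 (hM.det_principalSubmatrix_insert_insert_mul_le hx hy hxy)).1
  simp only [Complex.mul_re, ← (hdet _).2, mul_zero, sub_zero] at h
  rw [← Real.log_mul (hdet _).1.ne' (hdet _).1.ne',
    ← Real.log_mul (hdet _).1.ne' (hdet _).1.ne']
  exact Real.log_le_log (mul_pos (hdet _).1 (hdet _).1) h

end Matrix

section Compression

variable {Γ : Type*} [Group Γ] [DecidableEq Γ] {d : ℕ} (k : Γ → Matrix (Fin d) (Fin d) ℂ)

noncomputable def logDetCompression (A : Finset Γ) : ℝ :=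
  Real.log (kernelCompression k A).det.re

theorem logDetCompression_empty : logDetCompression k ∅ = 0 := by
  simp [logDetCompression, det_isEmpty]

variable {k} in
theorem det_kernelCompression_re_pos
    (hpos : ∀ F : Finset Γ, F.Nonempty → (kernelCompression k F).PosDef) (A : Finset Γ) :
    0 < (kernelCompression k A).det.re := by
  obtain rfl | hA := A.eq_empty_or_nonempty
  · simp [det_isEmpty]
  · exact (Complex.pos_iff.1 (hpos A hA).det_pos).1

theorem det_kernelCompression_image_mul_right (A : Finset Γ) (t : Γ) :
    (kernelCompression k (A.image (· * t))).det = (kernelCompression k A).det := by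
  let e : A ≃ A.image (· * t) :=
    { toFun := fun a => ⟨a * t, mem_image_of_mem _ a.2⟩
      invFun := fun b => ⟨b * t⁻¹, by
        obtain ⟨a, ha, hab⟩ := mem_image.1 b.2
        simpa [← hab] using ha⟩
      left_inv := fun a => by simp
      right_inv := fun b => by simp }
  rw [← det_submatrix_equiv_self (e.prodCongr (Equiv.refl _))]
  congr 1
  ext p q
  simp [kernelCompression, e, mul_assoc]

theorem logDetCompression_image_mul_right (A : Finset Γ) (t : Γ) :
    logDetCompression k (A.image (· * t)) = logDetCompression k A := by
  rw [logDetCompression, det_kernelCompression_image_mul_right, logDetCompression]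

theorem det_kernelCompression_eq_det_principalSubmatrix {A F : Finset Γ} (hAF : A ⊆ F) :
    (kernelCompression k A).det =
      ((kernelCompression k F).principalSubmatrix {p | (p.1 : Γ) ∈ A}).det := by
  let e : A × Fin d ≃ ({p | (p.1 : Γ) ∈ A} : Finset (F × Fin d)) :=
    { toFun := fun p => ⟨(⟨p.1, hAF p.1.2⟩, p.2), by simp⟩
      invFun := fun q => (⟨q.1.1, (mem_filter.1 q.2).2⟩, q.1.2)
      left_inv := fun _ => rfl
      right_inv := fun _ => rfl }
  rw [← det_submatrix_equiv_self e]
  rfl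

variable {k} in
theorem isSubmodular_logDetCompression
    (hpos : ∀ F : Finset Γ, F.Nonempty → (kernelCompression k F).PosDef) :
    IsSubmodular (logDetCompression k) := by
  intro S T
  obtain hST | hST := (S ∪ T).eq_empty_or_nonempty
  · obtain ⟨rfl, rfl⟩ := union_eq_empty.1 hST
    simp
  let blocks (A : Finset Γ) : Finset ((S ∪ T : Finset Γ) × Fin d) := {p | (p.1 : Γ) ∈ A}
  have hblock : ∀ A ⊆ S ∪ T, logDetCompression k A =
      Real.log ((kernelCompression k (S ∪ T)).principalSubmatrix (blocks A)).det.re :=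
    fun A hA => by rw [logDetCompression, det_kernelCompression_eq_det_principalSubmatrix k hA]
  have hunion : blocks (S ∪ T) = blocks S ∪ blocks T := by
    ext p
    simpa [blocks] using mem_union.1 p.1.2
  have hinter : blocks (S ∩ T) = blocks S ∩ blocks T := by ext; simp [blocks]
  rw [hblock _ subset_rfl, hblock _ (inter_subset_left.trans subset_union_left),
    hblock _ subset_union_left, hblock _ subset_union_right, hunion, hinter]
  exact (hpos _ hST).isSubmodular_log_det_re (blocks S) (blocks T)

end Compression

theorem det_compression_pow_inv_card_tendsto_inf_general {Γ : Type*} [Group Γ]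
    [DecidableEq Γ]
    (d : ℕ) (k : Γ → Matrix (Fin d) (Fin d) ℂ)
    (hpos : ∀ F : Finset Γ, F.Nonempty → (kernelCompression k F).PosDef) :
    0 ≤ sInf {r : ℝ | ∃ F : Finset Γ, F.Nonempty ∧
        r = ((kernelCompression k F).det.re) ^ ((F.card : ℝ)⁻¹)} ∧
    (∀ F : Finset Γ, F.Nonempty →
      sInf {r : ℝ | ∃ F : Finset Γ, F.Nonempty ∧
          r = ((kernelCompression k F).det.re) ^ ((F.card : ℝ)⁻¹)} ≤
        ((kernelCompression k F).det.re) ^ ((F.card : ℝ)⁻¹)) ∧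
    (∀ ε : ℝ, 0 < ε → ∃ (K : Finset Γ) (δ : ℝ), K.Nonempty ∧ 0 < δ ∧
      ∀ F : Finset Γ, memApproxInv K δ F →
        ((kernelCompression k F).det.re) ^ ((F.card : ℝ)⁻¹) <
          sInf {r : ℝ | ∃ F : Finset Γ, F.Nonempty ∧
              r = ((kernelCompression k F).det.re) ^ ((F.card : ℝ)⁻¹)} + ε) := by
  have hrpow (F : Finset Γ) : (kernelCompression k F).det.re ^ ((#F : ℝ)⁻¹) =
      Real.exp (logDetCompression k F / #F) := by
    rw [Real.rpow_def_of_pos (det_kernelCompression_re_pos hpos F), logDetCompression,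
      div_eq_mul_inv]
  set S := {r : ℝ | ∃ F : Finset Γ, F.Nonempty ∧
    r = ((kernelCompression k F).det.re) ^ ((F.card : ℝ)⁻¹)}
  have hS : ∀ r ∈ S, 0 ≤ r := by
    rintro _ ⟨F, -, rfl⟩
    exact (Real.rpow_pos_of_pos (det_kernelCompression_re_pos hpos F) _).le
  refine ⟨Real.sInf_nonneg hS, fun F hF => csInf_le ⟨0, hS⟩ ⟨F, hF, rfl⟩, fun ε hε => ?_⟩
  have hc : 0 < sInf S + ε := by linarith [Real.sInf_nonneg hS]
  have hSne : S.Nonempty := ⟨_, {1}, singleton_nonempty 1, rfl⟩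
  obtain ⟨_, ⟨W, hW, rfl⟩, hWlt⟩ := exists_lt_of_csInf_lt hSne (lt_add_of_pos_right (sInf S) hε)
  rw [hrpow, ← Real.lt_log_iff_exp_lt hc] at hWlt
  obtain ⟨δ, hδ, hF⟩ :=
    (isSubmodular_logDetCompression hpos).exists_forall_memApproxInv_div_card_lt
      (logDetCompression_empty k) (logDetCompression_image_mul_right k) hW hWlt
  refine ⟨W ∪ W⁻¹, δ, hW.mono subset_union_left, hδ, fun F hF' => ?_⟩
  rw [hrpow, ← Real.lt_log_iff_exp_lt hc]
  exact hF F hF'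

/-- **Szegő-type approximation of the Fuglede–Kadison determinant (Theorem 3.1).**
Let `Γ` be a countable discrete amenable group, `d ≥ 1`, and `k : Γ → M_d(ℂ)` such that all
compressions `h_F` are positive definite.  Then `det(h_F)^{1/|F|}` converges to
`inf_F det(h_F)^{1/|F|}` as `F` becomes more and more left invariant: the infimum `c` is a
nonnegative real, `det(h_F)^{1/|F|} ≥ c` for every nonempty finite `F`, and for every
`ε > 0` there are a nonempty finite `K ⊆ Γ` and `δ > 0` with `det(h_F)^{1/|F|} < c + ε`
for all `F ∈ B(K,δ)`. -/
theorem det_compression_pow_inv_card_tendsto_inf {Γ : Type*} [Group Γ] [Countable Γ]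
    [DecidableEq Γ]
    (hamen : ∀ K : Finset Γ, K.Nonempty → ∀ δ : ℝ, 0 < δ → ∃ F : Finset Γ, memApproxInv K δ F)
    (d : ℕ) (hd : 1 ≤ d) (k : Γ → Matrix (Fin d) (Fin d) ℂ)
    (hpos : ∀ F : Finset Γ, F.Nonempty → (kernelCompression k F).PosDef) :
    0 ≤ sInf {r : ℝ | ∃ F : Finset Γ, F.Nonempty ∧
        r = ((kernelCompression k F).det.re) ^ ((F.card : ℝ)⁻¹)} ∧
    (∀ F : Finset Γ, F.Nonempty →
      sInf {r : ℝ | ∃ F : Finset Γ, F.Nonempty ∧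
          r = ((kernelCompression k F).det.re) ^ ((F.card : ℝ)⁻¹)} ≤
        ((kernelCompression k F).det.re) ^ ((F.card : ℝ)⁻¹)) ∧
    (∀ ε : ℝ, 0 < ε → ∃ (K : Finset Γ) (δ : ℝ), K.Nonempty ∧ 0 < δ ∧
      ∀ F : Finset Γ, memApproxInv K δ F →
        ((kernelCompression k F).det.re) ^ ((F.card : ℝ)⁻¹) <
          sInf {r : ℝ | ∃ F : Finset Γ, F.Nonempty ∧
              r = ((kernelCompression k F).det.re) ^ ((F.card : ℝ)⁻¹)} + ε) :=
  det_compression_pow_inv_card_tendsto_inf_general d k hpos
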